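/- arXiv:2301.12544 — 3 statements merged into one kernel-verified Lean document; each statement's English description precedes it below -/
import Mathlib

section
/- For each 1 ≤ r ≤ ⌊n/2⌋, the subspace 𝔫_r = ⊕_{s ≤ r} 𝔪_s is an ideal of the Lie algebra 𝔫 of strictly upper triangular matrices. -/
/-! `𝔫_r` is exactly the space of matrices supported on the index pairs `a < b` with
`a < r` or `b ≥ n - r` (the first `r` rows and last `r` columns above the diagonal). This set of
positions absorbs strictly upper triangular positions on either side: `a < k` and `(k, b)` admissible
give `(a, b)` admissible, and so do `(a, k)` admissible and `k < b`. Hence `X * Y` and `Y * X` stay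
supported there for `X ∈ 𝔫`. -/

open Matrix

/-- Elementary matrix `e_{i,j}` (0-based indices). -/
def elemMat (n : ℕ) (i j : Fin n) : Matrix (Fin n) (Fin n) ℝ :=
  Matrix.single i j 1

/-- The spanning set of the Heisenberg subalgebra `𝔪_s` (1-based index `s`). -/
def mSet (n s : ℕ) : Set (Matrix (Fin n) (Fin n) ℝ) :=
  {X | ∃ i j : Fin n,
    (((i : ℕ) = s - 1 ∧ s - 1 < (j : ℕ) ∧ (j : ℕ) ≤ n - s) ∨
     ((j : ℕ) = n - s ∧ s - 1 < (i : ℕ) ∧ (i : ℕ) < n - s)) ∧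
    X = elemMat n i j}

/-- The subspace `𝔪_s`. -/
def mAlg (n s : ℕ) : Submodule ℝ (Matrix (Fin n) (Fin n) ℝ) :=
  Submodule.span ℝ (mSet n s)

/-- The ideal `𝔫_r = 𝔪_1 + ⋯ + 𝔪_r`. -/
def nIdeal (n r : ℕ) : Submodule ℝ (Matrix (Fin n) (Fin n) ℝ) :=
  ⨆ s ∈ Finset.Icc 1 r, mAlg n s

namespace Matrix

variable {l m n R : Type*}

section Supported

variable [Semiring R]

variable (R) in
def supported (P : m → n → Prop) : Submodule R (Matrix m n R) where
  carrier := {Y | ∀ a b, ¬ P a b → Y a b = 0}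
  add_mem' hY hZ a b h := by simp [hY a b h, hZ a b h]
  zero_mem' _ _ _ := rfl
  smul_mem' c Y hY a b h := by simp [hY a b h]

theorem mul_mem_supported [Fintype m] {P : l → m → Prop} {Q : m → n → Prop}
    {S : l → n → Prop} {X : Matrix l m R} {Y : Matrix m n R} (hX : X ∈ supported R P)
    (hY : Y ∈ supported R Q) (hPQ : ∀ a k b, P a k → Q k b → S a b) :
    X * Y ∈ supported R S := by
  intro a b hab
  refine Finset.sum_eq_zero fun k _ => show X a k * Y k b = 0 from ?_
  by_cases hP : P a k
  · rw [hY k b fun hQ => hab (hPQ a k b hP hQ), mul_zero]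
  · rw [hX a k hP, zero_mul]

theorem span_single_eq_supported [Fintype m] [Fintype n] [DecidableEq m] [DecidableEq n]
    (P : m → n → Prop) :
    Submodule.span R {Y | ∃ a b, P a b ∧ Y = single a b 1} = supported R P := by
  refine le_antisymm (Submodule.span_le.mpr ?_) fun Y hY => ?_
  · rintro _ ⟨a, b, hab, rfl⟩ a' b' h
    exact single_apply_of_ne _ _ _ _ _ (by rintro ⟨rfl, rfl⟩; exact h hab)
  · rw [matrix_eq_sum_single Y]
    refine Submodule.sum_mem _ fun a _ => Submodule.sum_mem _ fun b _ => ?_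
    by_cases h : P a b
    · rw [← mul_one (Y a b), ← smul_eq_mul, ← smul_single]
      exact Submodule.smul_mem _ _ (Submodule.subset_span ⟨a, b, h, rfl⟩)
    · rw [hY a b h, single_zero]
      exact zero_mem _

end Supported

end Matrix

def InHooks (n r : ℕ) (a b : Fin n) : Prop :=
  a < b ∧ ((a : ℕ) < r ∨ n - r ≤ (b : ℕ))

section InHooks

variable {n r : ℕ} {a b k : Fin n}

theorem InHooks.of_lt_left (hak : a < k) (h : InHooks n r k b) : InHooks n r a b := by
  unfold InHooks at *
  omega

theorem InHooks.of_lt_right (h : InHooks n r a k) (hkb : k < b) : InHooks n r a b := by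
  unfold InHooks at *
  omega

end InHooks

theorem mSet_subset_inHooks {n r s : ℕ} (hs : s ∈ Finset.Icc 1 r) :
    mSet n s ⊆ {Y | ∃ a b, InHooks n r a b ∧ Y = single a b 1} := by
  rintro _ ⟨i, j, hij, rfl⟩
  rw [Finset.mem_Icc] at hs
  exact ⟨i, j, by unfold InHooks; omega, rfl⟩

/-- The pair `(a, b)` lies in the hook of `𝔪_{a+1}` if `a + b < n`, and in that of `𝔪_{n-b}`
otherwise. -/
theorem elemMat_mem_nIdeal {n r : ℕ} {a b : Fin n} (h : InHooks n r a b) :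
    elemMat n a b ∈ nIdeal n r := by
  unfold InHooks at h
  by_cases hab : (a : ℕ) + b < n
  · exact le_iSup₂ (f := fun s (_ : s ∈ Finset.Icc 1 r) => mAlg n s) (a + 1 : ℕ)
      (by rw [Finset.mem_Icc]; omega) (Submodule.subset_span ⟨a, b, Or.inl (by omega), rfl⟩)
  · exact le_iSup₂ (f := fun s (_ : s ∈ Finset.Icc 1 r) => mAlg n s) (n - b : ℕ)
      (by rw [Finset.mem_Icc]; omega) (Submodule.subset_span ⟨a, b, Or.inr (by omega), rfl⟩)

theorem nIdeal_eq_supported (n r : ℕ) : nIdeal n r = Matrix.supported ℝ (InHooks n r) := by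
  rw [← span_single_eq_supported]
  refine le_antisymm (iSup₂_le fun s hs => Submodule.span_mono (mSet_subset_inHooks hs)) ?_
  exact Submodule.span_le.mpr fun _ ⟨a, b, h, hY⟩ => hY ▸ elemMat_mem_nIdeal h

theorem nIdeal_isIdeal_general (n r : ℕ)
    (X : Matrix (Fin n) (Fin n) ℝ)
    (hX : ∀ i j : Fin n, (j : ℕ) ≤ (i : ℕ) → X i j = 0) :
    ∀ Y ∈ nIdeal n r, X * Y - Y * X ∈ nIdeal n r := by
  intro Y hY
  rw [nIdeal_eq_supported] at hY ⊢
  have hX' : X ∈ Matrix.supported ℝ (fun i j : Fin n => i < j) :=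
    fun i j h => hX i j (not_lt.mp h)
  exact sub_mem (mul_mem_supported hX' hY fun _ _ _ => InHooks.of_lt_left)
    (mul_mem_supported hY hX' fun _ _ _ => InHooks.of_lt_right)

/-- for `1 ≤ r ≤ ⌊n/2⌋`, the subspace `𝔫_r = ⨁_{s ≤ r} 𝔪_s` is an ideal of
the Lie algebra `𝔫` of strictly upper triangular matrices: `[𝔫, 𝔫_r] ⊆ 𝔫_r`. -/
theorem nIdeal_isIdeal (n r : ℕ) (hr : 1 ≤ r) (hrn : 2 * r ≤ n)
    (X : Matrix (Fin n) (Fin n) ℝ)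
    (hX : ∀ i j : Fin n, (j : ℕ) ≤ (i : ℕ) → X i j = 0) :
    ∀ Y ∈ nIdeal n r, X * Y - Y * X ∈ nIdeal n r :=
  nIdeal_isIdeal_general n r X hX
end

section
/- The Lie algebra 𝔫 of strictly upper triangular n×n matrices decomposes as the direct sum of the subalgebras 𝔪_1, ..., 𝔪_R where R = ⌊n/2⌋, and dim 𝔫 = ∑_{r=1}^R (2(n-2r)+1) = n(n-1)/2. -/
/-!
`𝔪_s` is spanned by the elementary matrices on a hook: row `s` from column `s + 1` to
`n - s + 1`, then column `n - s + 1` down to row `n - s`. For `s = 1, …, ⌊n/2⌋` these hooks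
partition the positions above the diagonal, `(i, j)` lying on hook `min(i, n + 1 - j)`. Since the elementary matrices form a basis,
spans of disjoint sets of them are independent and spans of a partition add up to the whole span,
whose dimension is the number `n(n-1)/2` of positions. The remaining sum formula is arithmetic.
-/

open Matrix

/-- The strictly upper triangular `n × n` real matrices (the Lie algebra `𝔫`). -/
def strictUpper (n : ℕ) : Submodule ℝ (Matrix (Fin n) (Fin n) ℝ) where
  carrier := {X | ∀ i j : Fin n, (j : ℕ) ≤ (i : ℕ) → X i j = 0}
  add_mem' := by intro a b ha hb i j h; simp [ha i j h, hb i j h]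
  zero_mem' := by intro i j h; rfl
  smul_mem' := by intro c x hx i j h; simp [hx i j h]

open Finset Function

theorem LinearIndependent.iSupIndep_span_image {ι κ R M : Type*} [Semiring R] [AddCommMonoid M]
    [Module R M] {v : ι → M} (hv : LinearIndependent R v) {s : κ → Set ι}
    (hs : Pairwise (Disjoint on s)) :
    iSupIndep fun k => Submodule.span R (v '' s k) := by
  refine iSupIndep_def.mpr fun k => ?_
  simp_rw [← Submodule.span_iUnion, ← Set.image_iUnion]
  exact hv.disjoint_span_image (Set.disjoint_iUnion₂_right.mpr fun j hj => hs hj.symm)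

theorem Module.Basis.finrank_span_image {ι R M : Type*} [Ring R] [Nontrivial R]
    [StrongRankCondition R] [AddCommGroup M] [Module R M] (b : Basis ι R M) (s : Finset ι) :
    Module.finrank R (Submodule.span R (b '' s)) = #s := by
  have := finrank_span_eq_card (b.linearIndependent.comp ((↑) : s → ι) Subtype.val_injective)
  rwa [Set.range_comp, Subtype.range_coe_subtype, Fintype.card_coe] at this

theorem Matrix.mem_span_stdBasis_image {m n R : Type*} [Fintype m] [Finite n] [Semiring R] {S : Set (m × n)} {X : Matrix m n R} :
    X ∈ Submodule.span R (stdBasis R m n '' S) ↔ ∀ p ∉ S, X p.1 p.2 = 0 := by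
  rw [Module.Basis.mem_span_image]
  refine forall_congr' fun p => ?_
  simp [stdBasis, not_imp_comm]

theorem card_filter_fst_lt_snd (n : ℕ) : #{p : Fin n × Fin n | p.1 < p.2} = n * (n - 1) / 2 := by
  rw [card_filter, Fintype.sum_prod_type]
  simp only [sum_boole, Nat.cast_id, filter_lt_eq_Ioi, Fin.card_Ioi]
  rw [Fin.sum_univ_eq_sum_range (fun i => n - 1 - i), sum_range_reflect (fun i => i) n,
    sum_range_id]

theorem sum_range_half_two_mul_sub_add_one (n : ℕ) :
    ∑ r ∈ range (n / 2), (2 * (n - 2 * (r + 1)) + 1) = n * (n - 1) / 2 := by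
  induction n using Nat.twoStepInduction with
  | zero => rfl
  | one => rfl
  | more n ih _ =>
    have hshift : ∀ r, 2 * (n + 2 - 2 * (r + 1 + 1)) + 1 = 2 * (n - 2 * (r + 1)) + 1 := by omega
    rw [show (n + 2) / 2 = n / 2 + 1 by omega, sum_range_succ']
    simp only [hshift, ih]
    rw [show n + 2 = n + 1 + 1 from rfl, Nat.triangle_succ, Nat.triangle_succ]
    omega

def mSupport (n s : ℕ) : Set (Fin n × Fin n) :=
  {p | ((p.1 : ℕ) = s - 1 ∧ s - 1 < (p.2 : ℕ) ∧ (p.2 : ℕ) ≤ n - s) ∨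
       ((p.2 : ℕ) = n - s ∧ s - 1 < (p.1 : ℕ) ∧ (p.1 : ℕ) < n - s)}

theorem mAlg_eq_span_stdBasis_image (n s : ℕ) :
    mAlg n s = Submodule.span ℝ (stdBasis ℝ (Fin n) (Fin n) '' mSupport n s) := by
  rw [mAlg]
  congr 1
  ext X
  simp only [mSet, mSupport, elemMat, Set.mem_image, Prod.exists, stdBasis_eq_single, eq_comm]
  exact Iff.rfl

theorem strictUpper_eq_span_stdBasis_image (n : ℕ) :
    strictUpper n = Submodule.span ℝ (stdBasis ℝ (Fin n) (Fin n) '' {p | p.1 < p.2}) := by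
  ext X
  rw [mem_span_stdBasis_image]
  exact ⟨fun h p hp => h p.1 p.2 (not_lt.mp hp), fun h i j hji => h (i, j) hji.not_gt⟩

theorem pairwise_disjoint_mSupport (n : ℕ) :
    Pairwise (Disjoint on fun r : Fin (n / 2) => mSupport n ((r : ℕ) + 1)) := by
  intro r t hrt
  refine Set.disjoint_left.mpr fun p hr ht => hrt (Fin.ext ?_)
  simp only [mSupport, Set.mem_ofPred_eq] at hr ht
  omega

theorem iUnion_mSupport (n : ℕ) :
    ⋃ r : Fin (n / 2), mSupport n ((r : ℕ) + 1) = {p | p.1 < p.2} := by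
  ext ⟨i, j⟩
  simp only [Set.mem_iUnion, Set.mem_ofPred_eq, mSupport, Fin.lt_def]
  constructor
  · rintro ⟨r, h⟩
    omega
  · intro hij
    by_cases hrow : (i : ℕ) + 1 ≤ n - j
    · exact ⟨⟨i, by omega⟩, Or.inl (by dsimp only; omega)⟩
    · exact ⟨⟨n - j - 1, by omega⟩, Or.inr (by dsimp only; omega)⟩

theorem finrank_strictUpper (n : ℕ) : Module.finrank ℝ (strictUpper n) = n * (n - 1) / 2 := by
  rw [strictUpper_eq_span_stdBasis_image, ← card_filter_fst_lt_snd, ← coe_filter_univ,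
    Module.Basis.finrank_span_image]

/-- `𝔫` decomposes as the direct sum of the subalgebras `𝔪_1, …, 𝔪_R`
(`R = ⌊n/2⌋`), and `dim 𝔫 = ∑_{r=1}^R (2(n-2r)+1) = n(n-1)/2`. -/
theorem strictUpper_directSum_mAlg (n : ℕ) :
    iSupIndep (fun r : Fin (n / 2) => mAlg n ((r : ℕ) + 1)) ∧
    (⨆ r : Fin (n / 2), mAlg n ((r : ℕ) + 1)) = strictUpper n ∧
    Module.finrank ℝ (strictUpper n) = ∑ r : Fin (n / 2), (2 * (n - 2 * ((r : ℕ) + 1)) + 1) ∧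
    Module.finrank ℝ (strictUpper n) = n * (n - 1) / 2 := by
  refine ⟨?_, ?_, ?_, finrank_strictUpper n⟩
  · simp_rw [mAlg_eq_span_stdBasis_image]
    exact LinearIndependent.iSupIndep_span_image (stdBasis ℝ (Fin n) (Fin n)).linearIndependent
      (pairwise_disjoint_mSupport n)
  · simp_rw [mAlg_eq_span_stdBasis_image, ← Submodule.span_iUnion, ← Set.image_iUnion,
      iUnion_mSupport, strictUpper_eq_span_stdBasis_image]
  · rw [finrank_strictUpper, Fin.sum_univ_eq_sum_range (fun r => 2 * (n - 2 * (r + 1)) + 1),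
      sum_range_half_two_mul_sub_add_one]
end

section
/- In particular, for r = 1,...,⌊n/2⌋, the function E_{0,r}(X) = (leading coefficient in η of det(X - ηI)_{(r)}) on strictly lower triangular matrices X is invariant under conjugation by upper unipotent matrices: E_{0,r}(π_{𝔫_-}(u X u^{-1})) = E_{0,r}(X) for all upper unipotent u, where π_{𝔫_-} projects onto the strictly lower triangular part. -/
/-!
Reorder the rows and columns of the chopped matrix `(Y - ηI)_{(r)}` into blocks
`[[A - ηI, B], [C, D]]`, where `D` is the lower-left `r × r` corner of `Y` (rows `n-r+1, …, n`,
columns `1, …, r`). Multiplying the last `r` rows by `η` gives `η • [[-I, 0], [C, D]] + const`,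
whose top coefficient is `± det D`; so `E_{0,r}(Y) = ± det D` for every `Y`. Since `u` is upper
unitriangular, the corner of `uY` (resp. `Yu`) is the corner of `Y` multiplied by a unitriangular
diagonal block of `u`, and `π_{𝔫_-}` does not change the corner because `2r ≤ n`. Applying this to
`u (u⁻¹ X u) = X u` gives the invariance.
-/

open Matrix Polynomial

/-- The `r`-chop characteristic polynomial `det (X - η I)_{(r)}`. -/
noncomputable def chopDet (n r : ℕ) (X : Matrix (Fin n) (Fin n) ℝ) : Polynomial ℝ :=
  Matrix.det
    ((X.map (Polynomial.C) - (Polynomial.X : Polynomial ℝ) • 1).submatrix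
      (fun i : Fin (n - r) => (⟨(i : ℕ) + r, by have := i.isLt; omega⟩ : Fin n))
      (fun j : Fin (n - r) => (⟨(j : ℕ), by have := j.isLt; omega⟩ : Fin n)))

/-- `E_{0,r}(X)`: the leading coefficient (coefficient of `η^{n-2r}`) of
`det (X - η I)_{(r)}`. -/
noncomputable def E0 (n r : ℕ) (X : Matrix (Fin n) (Fin n) ℝ) : ℝ :=
  (chopDet n r X).coeff (n - 2 * r)

/-- Projection onto the strictly lower triangular part. -/
def lowerProj (n : ℕ) (Y : Matrix (Fin n) (Fin n) ℝ) : Matrix (Fin n) (Fin n) ℝ :=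
  Matrix.of fun i j => if (j : ℕ) < (i : ℕ) then Y i j else 0

namespace Matrix

section

variable {R : Type*} [CommRing R] {m n : Type*} [Fintype m] [Fintype n] [DecidableEq m]
  [DecidableEq n]

theorem coeff_det_map_C_sub_X_smul_fromBlocks_one_zero (Z : Matrix (m ⊕ n) (m ⊕ n) R) :
    (det (Z.map C - (X : R[X]) • fromBlocks 1 0 0 0)).coeff (Fintype.card m) =
      (-1) ^ Fintype.card m * Z.toBlocks₂₂.det := by
  have hscale : fromBlocks 1 0 0 ((X : R[X]) • 1) * (Z.map C - (X : R[X]) • fromBlocks 1 0 0 0) =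
      (X : R[X]) • (fromBlocks (-1) 0 Z.toBlocks₂₁ Z.toBlocks₂₂).map C +
        (fromBlocks Z.toBlocks₁₁ Z.toBlocks₁₂ 0 0).map C := by
    conv_lhs => rw [← fromBlocks_toBlocks Z]
    simp only [fromBlocks_map, fromBlocks_smul, sub_eq_add_neg, fromBlocks_neg, fromBlocks_add,
      fromBlocks_multiply]
    congr 1 <;> ext <;> simp [add_comm, one_apply, apply_ite]
  have hdet := congrArg (fun M => (det M).coeff (Fintype.card m + Fintype.card n)) hscale
  simp only [det_mul, det_fromBlocks_zero₂₁, det_smul, det_one, one_mul, mul_one] at hdet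
  rwa [coeff_X_pow_mul, ← Fintype.card_sum, coeff_det_X_add_C_card, det_fromBlocks_zero₁₂,
    det_neg, det_one, mul_one] at hdet

theorem det_submatrix_equiv_equiv (e₁ e₂ : n ≃ m) (A : Matrix m m R) :
    (A.submatrix e₁ e₂).det = Equiv.Perm.sign (e₁.symm.trans e₂) * A.det := by
  rw [← det_permute', ← det_submatrix_equiv_self e₁]
  congr 1
  ext i j
  simp

end

variable {ι κ μ ν α : Type*}

theorem submatrix_mul_of_rows_supported [Fintype ι] [Fintype κ] [NonUnitalNonAssocSemiring α]
    (M : Matrix κ κ α) (N : Matrix κ ν α) {f : ι → κ} (hf : Function.Injective f) (g : μ → ν)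
    (hM : ∀ i l, l ∉ Set.range f → M (f i) l = 0) :
    (M * N).submatrix f g = M.submatrix f f * N.submatrix f g := by
  ext i j
  exact (Fintype.sum_of_injective f hf _ _ (fun l hl => by simp [hM i l hl]) fun _ => rfl).symm

theorem submatrix_mul_of_cols_supported [Fintype ι] [Fintype κ] [NonUnitalNonAssocSemiring α]
    (N : Matrix ν κ α) (M : Matrix κ κ α) {f : ι → κ} (hf : Function.Injective f) (g : μ → ν)
    (hM : ∀ l j, l ∉ Set.range f → M l (f j) = 0) :
    (N * M).submatrix g f = N.submatrix g f * M.submatrix f f := by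
  ext i j
  exact (Fintype.sum_of_injective f hf _ _ (fun l hl => by simp [hM l j hl]) fun _ => rfl).symm

theorem det_submatrix_eq_one_of_isUpperTriangular [CommRing α] [LinearOrder ι] [Fintype ι]
    [DecidableEq ι] [LinearOrder κ] {u : Matrix κ κ α} (hu : u.IsUpperTriangular)
    (hdiag : ∀ i, u i i = 1) {f : ι → κ} (hf : StrictMono f) : (u.submatrix f f).det = 1 := by
  rw [det_of_isUpperTriangular (M := u.submatrix f f) fun _ _ hij => hu (hf hij)]
  simp [hdiag]

end Matrix

def lowerLeftCorner {α : Type*} (n r : ℕ) (h : r ≤ n) (Y : Matrix (Fin n) (Fin n) α) :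
    Matrix (Fin r) (Fin r) α :=
  Y.submatrix (fun i => ⟨n - r + i, by omega⟩) (Fin.castLE h)

section lowerLeftCorner

variable {R : Type*} [CommRing R] {n r : ℕ} (h : r ≤ n) {u : Matrix (Fin n) (Fin n) R}

theorem det_lowerLeftCorner_mul_left (hu : u.IsUpperTriangular) (hdiag : ∀ i, u i i = 1)
    (W : Matrix (Fin n) (Fin n) R) :
    (lowerLeftCorner n r h (u * W)).det = (lowerLeftCorner n r h W).det := by
  have hmono : StrictMono fun i : Fin r => (⟨n - r + i, by omega⟩ : Fin n) :=
    fun a b hab => by simp only [Fin.mk_lt_mk]; omega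
  rw [lowerLeftCorner, submatrix_mul_of_rows_supported _ _ hmono.injective, det_mul,
    det_submatrix_eq_one_of_isUpperTriangular hu hdiag hmono, one_mul, lowerLeftCorner]
  intro i l hl
  refine hu (Fin.lt_def.mpr (show (l : ℕ) < n - r + i from ?_))
  by_contra! hle
  exact hl ⟨⟨l - (n - r), by omega⟩, Fin.ext (by simp only; omega)⟩

theorem det_lowerLeftCorner_mul_right (hu : u.IsUpperTriangular) (hdiag : ∀ i, u i i = 1)
    (W : Matrix (Fin n) (Fin n) R) :
    (lowerLeftCorner n r h (W * u)).det = (lowerLeftCorner n r h W).det := by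
  rw [lowerLeftCorner, submatrix_mul_of_cols_supported _ _ (Fin.castLE_injective h), det_mul,
    det_submatrix_eq_one_of_isUpperTriangular hu hdiag (Fin.strictMono_castLE h), mul_one,
    lowerLeftCorner]
  intro l j hl
  refine hu (Fin.lt_def.mpr (show (j : ℕ) < l from ?_))
  by_contra! hle
  exact hl ⟨⟨l, by omega⟩, rfl⟩

end lowerLeftCorner

theorem lowerLeftCorner_lowerProj {n r : ℕ} (h : 2 * r ≤ n) (Y : Matrix (Fin n) (Fin n) ℝ) :
    lowerLeftCorner n r (by omega) (lowerProj n Y) = lowerLeftCorner n r (by omega) Y := by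
  ext i j
  simp only [lowerLeftCorner, lowerProj, submatrix_apply, of_apply, Fin.val_castLE]
  rw [if_pos (by omega)]

theorem exists_E0_eq_mul_det_lowerLeftCorner (n r : ℕ) (h : 2 * r ≤ n) :
    ∃ ε : ℤˣ, ∀ Y, E0 n r Y = ε * (lowerLeftCorner n r (by omega) Y).det := by
  set k := n - 2 * r
  -- rows `i < k` of the chopped matrix carry `-η` in column `i + r`; bring these entries onto
  -- the diagonal of the first block
  let eR : Fin k ⊕ Fin r ≃ Fin (n - r) := finSumFinEquiv.trans (finCongr (by omega))
  let eC : Fin k ⊕ Fin r ≃ Fin (n - r) :=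
    (Equiv.sumComm _ _).trans (finSumFinEquiv.trans (finCongr (by omega)))
  refine ⟨Equiv.Perm.sign (eR.symm.trans eC) * (-1) ^ k, fun Y => ?_⟩
  let M : Matrix (Fin (n - r)) (Fin (n - r)) ℝ[X] := (Y.map C - (X : ℝ[X]) • 1).submatrix
    (fun i => ⟨i + r, by have := i.isLt; omega⟩) (fun j => ⟨j, by have := j.isLt; omega⟩)
  have hE0 : E0 n r Y = M.det.coeff k := rfl
  let Z : Matrix (Fin k ⊕ Fin r) (Fin k ⊕ Fin r) ℝ :=
    Y.submatrix (fun i => ⟨eR i + r, by have := (eR i).isLt; omega⟩)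
      (fun j => ⟨eC j, by have := (eC j).isLt; omega⟩)
  have hblocks : M.submatrix eR eC = Z.map C - (X : ℝ[X]) • fromBlocks 1 0 0 0 := by
    refine Matrix.ext fun i j => ?_
    rcases i with a | c <;> rcases j with b | d <;>
      simp [M, Z, eR, eC, one_apply, Fin.ext_iff] <;> (try split_ifs) <;> first | rfl | omega
  have hcorner : Z.toBlocks₂₂ = lowerLeftCorner n r (by omega) Y := by
    ext c d
    simp only [toBlocks₂₂, Z, lowerLeftCorner, of_apply, submatrix_apply]
    congr 1
    ext
    simp [eR]
    omega
  have hcoeff := coeff_det_map_C_sub_X_smul_fromBlocks_one_zero Z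
  rw [← hblocks, det_submatrix_equiv_equiv, hcorner, Fintype.card_fin, coeff_intCast_mul] at hcoeff
  have hsign : ((Equiv.Perm.sign (eR.symm.trans eC) : ℤ) : ℝ) *
      (Equiv.Perm.sign (eR.symm.trans eC) : ℤ) = 1 := by
    rw [← Int.cast_mul, ← Units.val_mul, Int.units_mul_self, Units.val_one, Int.cast_one]
  rw [hE0]
  push_cast
  linear_combination (Equiv.Perm.sign (eR.symm.trans eC) : ℝ) * hcoeff - M.det.coeff k * hsign

theorem E0_unipotent_invariant_general (n r : ℕ) (hrn : 2 * r ≤ n)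
    (u X : Matrix (Fin n) (Fin n) ℝ)
    (hu_upper : ∀ i j : Fin n, (j : ℕ) < (i : ℕ) → u i j = 0)
    (hu_diag : ∀ i : Fin n, u i i = 1) :
    E0 n r (lowerProj n (u⁻¹ * X * u)) = E0 n r X := by
  obtain ⟨ε, hε⟩ := exists_E0_eq_mul_det_lowerLeftCorner n r hrn
  have hu : u.IsUpperTriangular := fun i j hij => hu_upper i j hij
  have hunit : IsUnit u.det := by simp [det_of_isUpperTriangular hu, hu_diag]
  have hcancel : u * (u⁻¹ * X * u) = X * u := by
    rw [Matrix.mul_assoc, mul_nonsing_inv_cancel_left _ _ hunit]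
  rw [hε, hε, lowerLeftCorner_lowerProj hrn, ← det_lowerLeftCorner_mul_left _ hu hu_diag, hcancel,
    det_lowerLeftCorner_mul_right _ hu hu_diag]

/-- for `r = 1, …, ⌊n/2⌋`, the function `E_{0,r}` on strictly lower
triangular matrices is invariant under the coadjoint action of the upper unipotent group:
`E_{0,r}(π_{𝔫_-}(u⁻¹ X u)) = E_{0,r}(X)` for every upper unipotent `u`. -/
theorem E0_unipotent_invariant (n r : ℕ) (hr : 1 ≤ r) (hrn : 2 * r ≤ n)
    (u X : Matrix (Fin n) (Fin n) ℝ)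
    (hu_upper : ∀ i j : Fin n, (j : ℕ) < (i : ℕ) → u i j = 0)
    (hu_diag : ∀ i : Fin n, u i i = 1)
    (hX : ∀ i j : Fin n, (i : ℕ) ≤ (j : ℕ) → X i j = 0) :
    E0 n r (lowerProj n (u⁻¹ * X * u)) = E0 n r X :=
  E0_unipotent_invariant_general n r hrn u X hu_upper hu_diag
end
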